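/- Let R ∈ ℂ^{m×n}, let b ∈ ℂ^n, let 𝒮 denote the support of b (the set of indices of its non-zero entries), and set y = R b. Assume that the columns of R indexed by 𝒮 are linearly independent, and that there exists a vector v in the row space of R (i.e., v = R^H q for some q ∈ ℂ^m) such that v_i = b_i/|b_i| for all i ∈ 𝒮 and |v_i| < 1 for all i ∉ 𝒮. Then b is the unique minimizer of the program: minimize ‖b̃‖₁ subject to R b̃ = y. -/

import Mathlib

open Complex Matrix ComplexConjugate

/-! For `h = b' - b` in the kernel of `R`, the certificate gives `⟨v, h⟩ = ⟨q, R h⟩ = 0`.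
Since `‖v i‖ ≤ 1` and `conj (v i) * b i = ‖b i‖`, every index satisfies
`‖b i‖ + re (conj (v i) * h i) ≤ ‖b' i‖`; summing yields `‖b‖₁ ≤ ‖b'‖₁`. The inequality is
strict at an index off the support where `b'` is nonzero, since there `‖v i‖ < 1`. Such an
index exists: otherwise `h` is supported on the support of `b`, and linear independence of
those columns forces `h = 0`. -/

namespace Complex

lemma conj_div_norm_mul_self (z : ℂ) : conj (z / ‖z‖) * z = ‖z‖ := by
  rcases eq_or_ne z 0 with rfl | hz
  · simp
  rw [map_div₀, conj_ofReal, div_mul_eq_mul_div, conj_mul', sq,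
    mul_div_assoc, div_self (ofReal_ne_zero.mpr (norm_ne_zero_iff.mpr hz)), mul_one]

lemma norm_div_norm_self {z : ℂ} (hz : z ≠ 0) : ‖z / ‖z‖‖ = 1 := by
  rw [norm_div, norm_real, Real.norm_of_nonneg (norm_nonneg z), div_self (norm_ne_zero_iff.mpr hz)]

lemma re_conj_mul_le_norm {v : ℂ} (hv : ‖v‖ ≤ 1) (w : ℂ) : (conj v * w).re ≤ ‖w‖ :=
  calc (conj v * w).re ≤ ‖conj v * w‖ := re_le_norm _
    _ = ‖v‖ * ‖w‖ := by rw [norm_mul, RCLike.norm_conj]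
    _ ≤ ‖w‖ := mul_le_of_le_one_left (norm_nonneg w) hv

lemma re_conj_mul_lt_norm {v w : ℂ} (hv : ‖v‖ < 1) (hw : w ≠ 0) : (conj v * w).re < ‖w‖ :=
  calc (conj v * w).re ≤ ‖conj v * w‖ := re_le_norm _
    _ = ‖v‖ * ‖w‖ := by rw [norm_mul, RCLike.norm_conj]
    _ < ‖w‖ := mul_lt_of_lt_one_left (norm_pos_iff.mpr hw) hv

lemma norm_add_re_conj_mul_sub_le {v z : ℂ} (hv : ‖v‖ ≤ 1) (hvz : conj v * z = ‖z‖) (w : ℂ) :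
    ‖z‖ + (conj v * (w - z)).re ≤ ‖w‖ := by
  rw [mul_sub, sub_re, hvz, ofReal_re]
  linarith [re_conj_mul_le_norm hv w]

end Complex

namespace Matrix

variable {m n α : Type*} [Fintype n]

lemma star_dotProduct_eq_zero_of_mulVec_eq_zero [Fintype m] [CommSemiring α] [StarRing α]
    {R : Matrix m n α} {h : n → α} (hRh : R *ᵥ h = 0) (q : m → α) :
    star (Rᴴ *ᵥ q) ⬝ᵥ h = 0 := by
  rw [star_mulVec, conjTranspose_conjTranspose, ← dotProduct_mulVec, hRh, dotProduct_zero]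

lemma eq_zero_of_mulVec_eq_zero_of_linearIndependent [CommRing α] {R : Matrix m n α}
    {p : n → Prop} [DecidablePred p] (hli : LinearIndependent α (fun i : {i // p i} => Rᵀ i.1))
    {h : n → α} (hRh : R *ᵥ h = 0) (hsupp : ∀ i, ¬ p i → h i = 0) : h = 0 := by
  have hsum : ∑ i : {i // p i}, h i.1 • Rᵀ i.1 = 0 := by
    rw [← hRh, mulVec_eq_sum, ← Fintype.sum_subtype_add_sum_subtype p]
    have hoff : ∑ i : {i // ¬ p i}, h i.1 • Rᵀ i.1 = 0 :=
      Finset.sum_eq_zero fun i _ => by rw [hsupp i.1 i.2, zero_smul]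
    simp only [op_smul_eq_smul, hoff, add_zero]
  funext i
  by_cases hi : p i
  · exact Fintype.linearIndependent_iff.mp hli (fun i => h i.1) hsum ⟨i, hi⟩
  · exact hsupp i hi

end Matrix

theorem sum_norm_lt_sum_norm_of_dual_certificate {ι : Type*} [Fintype ι] {b b' v : ι → ℂ}
    (horth : star v ⬝ᵥ (b' - b) = 0) (hsign : ∀ i, b i ≠ 0 → v i = b i / ‖b i‖)
    (hlt : ∀ i, b i = 0 → ‖v i‖ < 1) {j : ι} (hbj : b j = 0) (hb'j : b' j ≠ 0) :
    ∑ i, ‖b i‖ < ∑ i, ‖b' i‖ := by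
  have hre : ∑ i, (conj (v i) * (b' i - b i)).re = 0 := by
    simpa only [dotProduct, Pi.star_apply, Pi.sub_apply, re_sum, zero_re, ← starRingEnd_apply]
      using congrArg re horth
  have hle : ∀ i, ‖b i‖ + (conj (v i) * (b' i - b i)).re ≤ ‖b' i‖ := by
    intro i
    by_cases hbi : b i = 0
    · exact norm_add_re_conj_mul_sub_le (hlt i hbi).le
        (by rw [hbi, mul_zero, norm_zero, ofReal_zero]) _
    · rw [hsign i hbi]
      exact norm_add_re_conj_mul_sub_le (norm_div_norm_self hbi).le (conj_div_norm_mul_self _) _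
  have hlt_j : ‖b j‖ + (conj (v j) * (b' j - b j)).re < ‖b' j‖ := by
    rw [hbj, sub_zero, norm_zero, zero_add]
    exact re_conj_mul_lt_norm (hlt j hbj) hb'j
  calc ∑ i, ‖b i‖ = ∑ i, (‖b i‖ + (conj (v i) * (b' i - b i)).re) := by
        rw [Finset.sum_add_distrib, hre, add_zero]
    _ < ∑ i, ‖b' i‖ := Finset.sum_lt_sum (fun i _ => hle i) ⟨j, Finset.mem_univ j, hlt_j⟩

/-- Existence of a dual certificate in the row space of `R` (together with linear
independence of the columns of `R` indexed by the support of `b`) implies that `b` is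
the unique minimizer of `ℓ₁`-minimization subject to `R b̃ = R b`. -/
theorem stmt5 (m n : ℕ) (R : Matrix (Fin m) (Fin n) ℂ) (b : Fin n → ℂ)
    (y : Fin m → ℂ) (hy : y = R.mulVec b)
    (hli : LinearIndependent ℂ (fun i : {i : Fin n // b i ≠ 0} => R.transpose i.1))
    (q : Fin m → ℂ) (v : Fin n → ℂ) (hv : v = R.conjTranspose.mulVec q)
    (hsign : ∀ i, b i ≠ 0 → v i = b i / (‖b i‖ : ℂ))
    (hlt : ∀ i, b i = 0 → ‖v i‖ < 1) :
    ∀ b' : Fin n → ℂ, R.mulVec b' = y → b' ≠ b →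
      ∑ i, ‖b i‖ < ∑ i, ‖b' i‖ := by
  classical
  intro b' hb' hne
  have hker : R *ᵥ (b' - b) = 0 := by rw [mulVec_sub, hb', hy, sub_self]
  have horth : star v ⬝ᵥ (b' - b) = 0 := hv ▸ star_dotProduct_eq_zero_of_mulVec_eq_zero hker q
  obtain ⟨j, hbj, hb'j⟩ : ∃ j, b j = 0 ∧ b' j ≠ 0 := by
    by_contra! hsupp
    refine hne (sub_eq_zero.mp (eq_zero_of_mulVec_eq_zero_of_linearIndependent hli hker ?_))
    intro i hi
    rw [not_not] at hi
    rw [Pi.sub_apply, hsupp i hi, hi, sub_zero]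
  exact sum_norm_lt_sum_norm_of_dual_certificate horth hsign hlt hbj hb'j
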